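/- The empirical quantile variance is an upward-biased estimator of aleatoric uncertainty: with y_i(θ) square-integrable, E_θ[Var_i(y_i(θ))] = Var_i(E_θ[y_i(θ)]) + (1/N)·Σ_{j=1}^N Var_θ(y_j(θ) − E_i[y_i(θ)]). In particular, if Var_θ(y_j(θ) − E_i[y_i(θ)]) > 0 for some j, then E_θ[Var_i(y_i(θ))] > Var_i(E_θ[y_i(θ)]) = σ²_aleatoric. -/

import Mathlib

open MeasureTheory ProbabilityTheory

/-- Empirical mean over the uniform distribution on `Fin N`. -/
noncomputable def empMean {N : ℕ} (v : Fin N → ℝ) : ℝ := (∑ i, v i) / N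

/-- Empirical variance over the uniform distribution on `Fin N`. -/
noncomputable def empVar {N : ℕ} (v : Fin N → ℝ) : ℝ :=
  (∑ j, (v j - empMean v) ^ 2) / N

/-! Pointwise in `θ`, `Var_i(y_i(θ))` is the empirical mean of `g_j(θ)²`, where
`g_j := y_j - E_i[y_i]`. Taking expectations and splitting each `E_θ[g_j²]` as
`Var_θ(g_j) + E_θ[g_j]²` gives the identity, because the empirical mean commutes with `E_θ`,
so that `E_θ[g_j] = E_θ[y_j] - E_i[E_θ[y_i]]` and the squares average to
`Var_i(E_θ[y_i])`. The bias term is a sum of variances, hence nonnegative, and positive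
as soon as one of them is. -/

section

variable {Θ : Type*} [MeasurableSpace Θ] {μ : Measure Θ} {N : ℕ}

lemma memLp_empMean {p : ENNReal} {y : Fin N → Θ → ℝ} (hy : ∀ i, MemLp (y i) p μ) :
    MemLp (fun θ => empMean (fun i => y i θ)) p μ := by
  simpa [empMean, div_eq_inv_mul] using
    (memLp_finsetSum' Finset.univ fun i _ => hy i).const_mul (N : ℝ)⁻¹

lemma integral_empMean {y : Fin N → Θ → ℝ} (hy : ∀ i, Integrable (y i) μ) :
    ∫ θ, empMean (fun i => y i θ) ∂μ = empMean (fun i => ∫ θ, y i θ ∂μ) := by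
  simp only [empMean]
  rw [integral_div, integral_finsetSum _ fun i _ => hy i]

lemma integral_sq_eq_variance_add_sq [IsProbabilityMeasure μ] {X : Θ → ℝ} (hX : MemLp X 2 μ) :
    ∫ θ, X θ ^ 2 ∂μ = variance X μ + (∫ θ, X θ ∂μ) ^ 2 := by
  rw [variance_eq_sub hX]
  simp

theorem integral_empVar [IsProbabilityMeasure μ] {y : Fin N → Θ → ℝ}
    (hy : ∀ i, MemLp (y i) 2 μ) :
    ∫ θ, empVar (fun i => y i θ) ∂μ =
      empVar (fun i => ∫ θ, y i θ ∂μ) +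
        (1 / N : ℝ) * ∑ j, variance (fun θ => y j θ - empMean (fun i => y i θ)) μ := by
  set g : Fin N → Θ → ℝ := fun j θ => y j θ - empMean (fun i => y i θ)
  have hg : ∀ j, MemLp (g j) 2 μ := fun j => (hy j).sub (memLp_empMean hy)
  have integral_g : ∀ j, ∫ θ, g j θ ∂μ = ∫ θ, y j θ ∂μ - empMean (fun i => ∫ θ, y i θ ∂μ) :=
    fun j => by
      rw [integral_sub ((hy j).integrable one_le_two) ((memLp_empMean hy).integrable one_le_two),
        integral_empMean fun i => (hy i).integrable one_le_two]
  calc ∫ θ, empVar (fun i => y i θ) ∂μ = (∑ j, ∫ θ, g j θ ^ 2 ∂μ) / N := by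
        rw [← integral_finsetSum _ fun j _ => (hg j).integrable_sq, ← integral_div]
        rfl
    _ = (∑ j, (∫ θ, g j θ ∂μ) ^ 2) / N + (1 / N : ℝ) * ∑ j, variance (g j) μ := by
        simp only [integral_sq_eq_variance_add_sq (hg _), Finset.sum_add_distrib]
        ring
    _ = _ := by
        simp only [integral_g]
        rfl

end

theorem empirical_quantile_variance_biased_general
    {Θ : Type*} [MeasurableSpace Θ] (μ : Measure Θ) [IsProbabilityMeasure μ]
    (N : ℕ) (y : Fin N → Θ → ℝ)
    (hL2 : ∀ i, MemLp (y i) 2 μ) :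
    (∫ θ, empVar (fun i => y i θ) ∂μ =
        empVar (fun i => ∫ θ, y i θ ∂μ) +
          (1 / N : ℝ) *
            ∑ j, variance (fun θ => y j θ - empMean (fun i => y i θ)) μ) ∧
      ((∃ j, 0 < variance (fun θ => y j θ - empMean (fun i => y i θ)) μ) →
        empVar (fun i => ∫ θ, y i θ ∂μ) < ∫ θ, empVar (fun i => y i θ) ∂μ) := by
  refine ⟨integral_empVar hL2, fun ⟨j, hj⟩ => ?_⟩
  have hN : 0 < (N : ℝ) := Nat.cast_pos.2 j.pos
  have bias_pos : 0 < (1 / N : ℝ) *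
      ∑ j, variance (fun θ => y j θ - empMean (fun i => y i θ)) μ :=
    mul_pos (by positivity)
      (Finset.sum_pos' (fun i _ => variance_nonneg _ _) ⟨j, Finset.mem_univ j, hj⟩)
  rw [integral_empVar hL2]
  linarith

/-- The empirical quantile variance is an upward-biased estimator of the aleatoric
uncertainty `σ²_aleatoric = Var_i(E_θ[y_i(θ)])`:
`E_θ[Var_i(y_i(θ))] = Var_i(E_θ[y_i(θ)]) + (1/N)·∑_j Var_θ(y_j(θ) − E_i[y_i(θ)])`,
and the bias is strict as soon as one of the variances `Var_θ(y_j(θ) − E_i[y_i(θ)])`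
is positive. -/
theorem empirical_quantile_variance_biased
    {Θ : Type*} [MeasurableSpace Θ] (μ : Measure Θ) [IsProbabilityMeasure μ]
    (N : ℕ) (hN : 0 < N) (y : Fin N → Θ → ℝ)
    (hmeas : ∀ i, Measurable (y i)) (hL2 : ∀ i, MemLp (y i) 2 μ) :
    (∫ θ, empVar (fun i => y i θ) ∂μ =
        empVar (fun i => ∫ θ, y i θ ∂μ) +
          (1 / N : ℝ) *
            ∑ j, variance (fun θ => y j θ - empMean (fun i => y i θ)) μ) ∧
      ((∃ j, 0 < variance (fun θ => y j θ - empMean (fun i => y i θ)) μ) →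
        empVar (fun i => ∫ θ, y i θ ∂μ) < ∫ θ, empVar (fun i => y i θ) ∂μ) :=
  empirical_quantile_variance_biased_general μ N y hL2
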